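/- arXiv:2304.02483 — 4 statements merged into one kernel-verified Lean document; each statement's English description precedes it below -/
import Mathlib

section
/- Reduction preserves the positroid cell locally: the image of the strictly positive orthant under P_{T₁} = (β₁+β₂, α_{n−1},…,α₁) equals (up to nonnegative closure and positive scaling) the image under P_{T₂} = (α_n,…,α₁); hence S_{T₁} = S_{T₂}. -/
/-- Reduction of a black 1-gon preserves the positroid cell.  `T₁` is an `(m+1)`-gon
with a black 1-gon at one vertex, parametrised by `(β₁+β₂, α_m,…,α₁)`; `T₂ = R_e(T₁)` is
the empty `(m+1)`-gon parametrised by `(α_{m+1},…,α₁)`.  Each strictly positive image is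
contained in the nonnegative image of the other, and the nonnegative closures coincide;
hence `S_{T₁} = S_{T₂}`. -/
theorem stmt_6 (m : ℕ) :
    (∀ a : Fin m → ℝ, ∀ b1 b2 : ℝ, (∀ i, 0 < a i) → 0 < b1 → 0 < b2 →
      ∃ a' : Fin (m + 1) → ℝ, (∀ i, 0 ≤ a' i) ∧
        (Fin.cons (b1 + b2) a : Fin (m + 1) → ℝ) = a') ∧
    (∀ a' : Fin (m + 1) → ℝ, (∀ i, 0 < a' i) →
      ∃ a : Fin m → ℝ, ∃ b1 b2 : ℝ, (∀ i, 0 ≤ a i) ∧ 0 ≤ b1 ∧ 0 ≤ b2 ∧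
        a' = (Fin.cons (b1 + b2) a : Fin (m + 1) → ℝ)) ∧
    ({y : Fin (m + 1) → ℝ | ∃ a : Fin m → ℝ, ∃ b1 b2 : ℝ,
        (∀ i, 0 ≤ a i) ∧ 0 ≤ b1 ∧ 0 ≤ b2 ∧ y = (Fin.cons (b1 + b2) a : Fin (m + 1) → ℝ)} =
      {y : Fin (m + 1) → ℝ | ∃ a' : Fin (m + 1) → ℝ, (∀ i, 0 ≤ a' i) ∧ y = a'}) := by
  refine ⟨fun a b1 b2 ha hb1 hb2 => ⟨Fin.cons (b1 + b2) a, fun i => ?_, rfl⟩,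
    fun a' ha' => ⟨fun i => a' i.succ, a' 0 / 2, a' 0 / 2,
      fun i => (ha' _).le, by linarith [ha' 0], by linarith [ha' 0], ?_⟩, ?_⟩
  · refine Fin.cases ?_ ?_ i <;> simp [le_of_lt, ha, hb1, hb2, add_pos hb1 hb2]
  · funext i
    refine Fin.cases ?_ ?_ i <;> simp
  · ext y
    simp only [Set.mem_setOf_eq]
    constructor
    · rintro ⟨a, b1, b2, ha, hb1, hb2, rfl⟩
      refine ⟨_, fun i => ?_, rfl⟩
      refine Fin.cases ?_ ?_ i <;> simp [ha, add_nonneg hb1 hb2]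
    · rintro ⟨a', ha', rfl⟩
      refine ⟨fun i => y i.succ, y 0 / 2, y 0 / 2, fun i => ha' _, by linarith [ha' 0], by linarith [ha' 0], ?_⟩
      funext i
      refine Fin.cases ?_ ?_ i <;> simp
end

section
/- Let T be a tiling with angles α₁,…,α_m and let α_i be a non-essential angle. If T' = d_{α_i}(T) is the degeneration of T at α_i, then for every k-subset I, the Plücker coordinate of T' satisfies Δ'_I = Δ_I|_{α_i = 0}; hence P_{T'} = P_T|_{α_i = 0} and consequently S̄_{T'} ⊆ S̄_T, i.e. T' < T. -/
open MvPolynomial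

lemma stmt_7_aux {A ι : Type*} [DecidableEq A] [DecidableEq ι] {R : Type*} [CommRing R]
    (M : Finset (Finset A)) (bd : Finset A → Finset ι) (α : A) (I : Finset ι)
    (f : A → R) (hf : f α = 0) :
    (∑ m ∈ (M.filter (fun m => α ∉ m)).filter (fun m => bd m = I),
        ∏ a ∈ m, f a) =
      ∑ m ∈ M.filter (fun m => bd m = I), ∏ a ∈ m, f a := by
  rw [Finset.filter_filter]
  rw [Finset.sum_filter, Finset.sum_filter]
  refine Finset.sum_congr rfl fun m _ => ?_
  by_cases hb : bd m = I
  · by_cases hα : α ∈ m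
    · simp [hb, hα, Finset.prod_eq_zero hα hf]
    · simp [hb, hα]
  · simp [hb]

/-- Degeneration at a non-essential angle `α`: the matchings of `T' = d_α(T)` are
exactly the matchings of `T` omitting `α`, so each Plücker coordinate of `T'` is the
corresponding coordinate of `T` with the variable `α` set to `0`; consequently every
nonnegative evaluation point of the parametrisation of `T'` is a nonnegative evaluation
point of that of `T`, i.e. `S̄_{T'} ⊆ S̄_T` and `T' < T`. -/
theorem stmt_7 {A ι : Type*} [DecidableEq A] [DecidableEq ι]
    (M : Finset (Finset A)) (bd : Finset A → Finset ι) (α : A)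
    (hne : ∃ m ∈ M, α ∉ m) :
    (∀ I : Finset ι,
      (∑ m ∈ (M.filter (fun m => α ∉ m)).filter (fun m => bd m = I),
          ∏ a ∈ m, (X a : MvPolynomial A ℝ)) =
        aeval (fun a => if a = α then 0 else (X a : MvPolynomial A ℝ))
          (∑ m ∈ M.filter (fun m => bd m = I), ∏ a ∈ m, (X a : MvPolynomial A ℝ))) ∧
    (∀ x : A → ℝ, (∀ a, 0 ≤ x a) →
      ∃ y : A → ℝ, (∀ a, 0 ≤ y a) ∧ ∀ I : Finset ι,
        eval x (∑ m ∈ (M.filter (fun m => α ∉ m)).filter (fun m => bd m = I),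
          ∏ a ∈ m, (X a : MvPolynomial A ℝ)) =
        eval y (∑ m ∈ M.filter (fun m => bd m = I), ∏ a ∈ m, (X a : MvPolynomial A ℝ))) := by
  constructor
  · intro I
    rw [map_sum]
    simp only [map_prod, aeval_X]
    rw [← stmt_7_aux (R := MvPolynomial A ℝ) M bd α I
        (fun a => if a = α then 0 else X a) (if_pos rfl)]
    refine Finset.sum_congr rfl fun m hm => Finset.prod_congr rfl fun a ha => ?_
    rw [Finset.mem_filter, Finset.mem_filter] at hm
    have : a ≠ α := fun h => hm.1.2 (h ▸ ha)
    simp [this]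
  · intro x hx
    refine ⟨fun a => if a = α then 0 else x a, fun a => ?_, fun I => ?_⟩
    · dsimp only; split <;> [exact le_refl 0; exact hx a]
    · rw [map_sum, map_sum]
      simp only [map_prod, eval_X]
      have h1 : (∑ m ∈ (M.filter (fun m => α ∉ m)).filter (fun m => bd m = I),
          ∏ a ∈ m, (if a = α then 0 else x a)) =
        ∑ m ∈ M.filter (fun m => bd m = I), ∏ a ∈ m, (if a = α then 0 else x a) :=
        stmt_7_aux (R := ℝ) M bd α I (fun a => if a = α then 0 else x a) (if_pos rfl)
      rw [← h1]
      refine Finset.sum_congr rfl fun m hm => Finset.prod_congr rfl fun a ha => ?_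
      rw [Finset.mem_filter, Finset.mem_filter] at hm
      have : a ≠ α := fun h => hm.1.2 (h ▸ ha)
      simp [this]
end

section
/- In the digon (de)contraction equivalence, for each k-subset I the Plücker coordinates satisfy Δ'_I = λ_I(β₁,β₂)·Δ_I, where λ_I = β₁ if i ∈ I and λ_I = β₂ if i ∉ I; consequently, defining μ = β₂β₁^{−q(p−1)} and ν = β₁^q with q = 1/p (p the common length of all matchings), one has Δ_I(a₁μ,…,a_sμ, a_{s+1}ν,…,a_rν) = Δ'_I(a₁,…,a_r,β₁,β₂) for all positive a_i, β_j, proving S_{T'} ⊆ S̄_T. -/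
open Real

/-- Digon (de)contraction identity.  `T` has angles `α₁,…,α_r` (modelled as `Fin r`),
the first `s` of which sit at the boundary vertex `i`; all matchings have cardinality
`p`; if `i ∈ ∂m` none of the first `s` angles occur in `m`, otherwise exactly one does.
With `q = 1/p`, `μ = β₂·β₁^{−q(p−1)}`, `ν = β₁^q`, scaling the first `s` parameters by
`μ` and the rest by `ν` multiplies each Plücker coordinate `Δ_I` by
`λ_I = β₁` (if `i ∈ I`) or `β₂` (if `i ∉ I`), i.e.
`Δ_I(a·μ,ν) = λ_I(β₁,β₂)·Δ_I(a) = Δ'_I(a,β₁,β₂)`; hence `S_{T'} ⊆ S̄_T`. -/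
theorem stmt_15 {n : ℕ} (r s p : ℕ) (i : Fin n)
    (M : Finset (Finset (Fin r))) (bd : Finset (Fin r) → Finset (Fin n))
    (hp : 0 < p) (hcard : ∀ m ∈ M, m.card = p)
    (hin : ∀ m ∈ M, i ∈ bd m → ∀ a ∈ m, ¬ ((a : ℕ) < s))
    (hout : ∀ m ∈ M, i ∉ bd m → (m.filter (fun a : Fin r => (a : ℕ) < s)).card = 1)
    (x : Fin r → ℝ) (hx : ∀ a, 0 < x a) (b1 b2 : ℝ) (hb1 : 0 < b1) (hb2 : 0 < b2) :
    (∀ I : Finset (Fin n),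
      (∑ m ∈ M.filter (fun m => bd m = I),
          ∏ a ∈ m, (x a * (if (a : ℕ) < s
            then b2 * b1 ^ (-(((1 : ℝ) / p) * ((p : ℝ) - 1)))
            else b1 ^ ((1 : ℝ) / p)))) =
        (if i ∈ I then b1 else b2) *
          ∑ m ∈ M.filter (fun m => bd m = I), ∏ a ∈ m, x a) ∧
    (∃ y : Fin r → ℝ, (∀ a, 0 ≤ y a) ∧ ∀ I : Finset (Fin n),
      (if i ∈ I then b1 else b2) *
          (∑ m ∈ M.filter (fun m => bd m = I), ∏ a ∈ m, x a) =
        ∑ m ∈ M.filter (fun m => bd m = I), ∏ a ∈ m, y a) := by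
  have hp' : (p : ℝ) ≠ 0 := Nat.cast_ne_zero.mpr hp.ne'
  set c : Fin r → ℝ := fun a => if (a : ℕ) < s
      then b2 * b1 ^ (-(((1 : ℝ) / p) * ((p : ℝ) - 1)))
      else b1 ^ ((1 : ℝ) / p) with hc
  have key : ∀ m ∈ M, (∏ a ∈ m, (x a * c a)) =
      (if i ∈ bd m then b1 else b2) * ∏ a ∈ m, x a := by
    intro m hm
    rw [Finset.prod_mul_distrib, mul_comm]
    congr 1
    by_cases hI : i ∈ bd m
    · rw [if_pos hI]
      have h1 : ∀ a ∈ m, c a = b1 ^ ((1 : ℝ) / p) := by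
        intro a ha
        simp only [hc, if_neg (hin m hm hI a ha)]
      rw [Finset.prod_congr rfl h1, Finset.prod_const, hcard m hm,
        ← Real.rpow_natCast (b1 ^ ((1 : ℝ) / p)) p, ← Real.rpow_mul hb1.le,
        one_div, inv_mul_cancel₀ hp', Real.rpow_one]
    · rw [if_neg hI]
      rw [← Finset.prod_filter_mul_prod_filter_not m (fun a : Fin r => (a : ℕ) < s)]
      have hc1 := hout m hm hI
      have hc2 : (m.filter (fun a : Fin r => ¬ (a : ℕ) < s)).card = p - 1 := by
        have h := Finset.card_filter_add_card_filter_not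
          (s := m) (p := fun a : Fin r => (a : ℕ) < s)
        have hcm := hcard m hm
        omega
      have e1 : (∏ a ∈ m.filter (fun a : Fin r => (a : ℕ) < s), c a) =
          b2 * b1 ^ (-(((1 : ℝ) / p) * ((p : ℝ) - 1))) := by
        have h1 : ∀ a ∈ m.filter (fun a : Fin r => (a : ℕ) < s),
            c a = b2 * b1 ^ (-(((1 : ℝ) / p) * ((p : ℝ) - 1))) := by
          intro a ha
          simp only [hc, if_pos (Finset.mem_filter.mp ha).2]
        rw [Finset.prod_congr rfl h1, Finset.prod_const, hc1, pow_one]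
      have e2 : (∏ a ∈ m.filter (fun a : Fin r => ¬ (a : ℕ) < s), c a) =
          b1 ^ (((1 : ℝ) / p) * ((p : ℝ) - 1)) := by
        have h2 : ∀ a ∈ m.filter (fun a : Fin r => ¬ (a : ℕ) < s),
            c a = b1 ^ ((1 : ℝ) / p) := by
          intro a ha
          simp only [hc, if_neg (Finset.mem_filter.mp ha).2]
        rw [Finset.prod_congr rfl h2, Finset.prod_const, hc2,
          ← Real.rpow_natCast (b1 ^ ((1 : ℝ) / p)) (p - 1), ← Real.rpow_mul hb1.le]
        congr 1
        have : ((p - 1 : ℕ) : ℝ) = (p : ℝ) - 1 := by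
          push_cast [Nat.cast_sub hp]
          ring
        rw [this]
      rw [e1, e2, mul_assoc, ← Real.rpow_add hb1, neg_add_cancel, Real.rpow_zero,
        mul_one]
  have main : ∀ I : Finset (Fin n),
      (∑ m ∈ M.filter (fun m => bd m = I), ∏ a ∈ m, (x a * c a)) =
        (if i ∈ I then b1 else b2) *
          ∑ m ∈ M.filter (fun m => bd m = I), ∏ a ∈ m, x a := by
    intro I
    rw [Finset.mul_sum]
    refine Finset.sum_congr rfl ?_
    intro m hm
    obtain ⟨hmM, hbd⟩ := Finset.mem_filter.mp hm
    rw [key m hmM, hbd]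
  refine ⟨main, ⟨fun a => x a * c a, ?_, fun I => (main I).symm⟩⟩
  intro a
  have : 0 < c a := by
    simp only [hc]
    split
    · exact mul_pos hb2 (Real.rpow_pos_of_pos hb1 _)
    · exact Real.rpow_pos_of_pos hb1 _
  exact (mul_pos (hx a) this).le
end

section
/- Matchings of a tiling correspond bijectively to almost perfect matchings of its plabic graph: given a tiling T with plabic graph G = Φ(T), the map m ↦ {e_α : α ∈ m} ∪ Ẽ, where Ẽ is the set of boundary edges of G adjacent to white vertices Φ(v) with v ∈ ∂m, is a bijection from matchings of T to almost perfect matchings of G. -/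
/-- Matchings of a tiling `T` are in bijection with almost perfect matchings of the
plabic graph `G = Φ(T)`.  `V` are vertices of `T` (white vertices of `G`), `F` are
faces (black vertices of `G`), `Ang ⊆ V × F` are the angles (edges of `G`), and `B ⊆ V`
are the boundary vertices, each carrying one pendant boundary edge (encoded `Sum.inr`).
The map sends a matching `m` to `{e_α : α ∈ m} ∪ Ẽ`, where `Ẽ` consists of the boundary
edges at the unmatched boundary vertices `∂m`. -/
theorem stmt_16 {V F : Type*} [DecidableEq V] [DecidableEq F]
    (Ang : Finset (V × F)) (B : Finset V) :
    Set.BijOn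
      (fun m : Finset (V × F) =>
        (m.image Sum.inl ∪
          (B.filter (fun v => v ∉ m.image Prod.fst)).image Sum.inr :
            Finset ((V × F) ⊕ V)))
      {m : Finset (V × F) | m ⊆ Ang ∧
        (∀ f : F, ∃! p : V × F, p ∈ m ∧ p.2 = f) ∧
        (∀ v : V, ∀ p ∈ m, ∀ q ∈ m, p.1 = v → q.1 = v → p = q) ∧
        (∀ v : V, v ∉ B → ∃ p ∈ m, p.1 = v)}
      {N : Finset ((V × F) ⊕ V) | N ⊆ Ang.image Sum.inl ∪ B.image Sum.inr ∧
        (∀ f : F, ∃! p : V × F, Sum.inl p ∈ N ∧ p.2 = f) ∧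
        (∀ v : V, ∃! e : (V × F) ⊕ V, e ∈ N ∧
          ((∃ p : V × F, e = Sum.inl p ∧ p.1 = v) ∨ e = Sum.inr v))} := by
  classical
  have hinl : ∀ (m : Finset (V × F)) (p : V × F),
      Sum.inl p ∈ (m.image Sum.inl ∪
        (B.filter (fun v => v ∉ m.image Prod.fst)).image Sum.inr :
          Finset ((V × F) ⊕ V)) ↔ p ∈ m := by
    intro m p; simp
  have hinr : ∀ (m : Finset (V × F)) (v : V),
      Sum.inr v ∈ (m.image Sum.inl ∪
        (B.filter (fun v => v ∉ m.image Prod.fst)).image Sum.inr :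
          Finset ((V × F) ⊕ V)) ↔ v ∈ B ∧ ∀ p ∈ m, p.1 ≠ v := by
    intro m v
    simp only [Finset.mem_union, Finset.mem_image, Finset.mem_filter]
    constructor
    · rintro (⟨p, _, h⟩ | ⟨w, ⟨hw, hw2⟩, h⟩)
      · exact absurd h (by simp)
      · obtain rfl : w = v := Sum.inr.inj h
        refine ⟨hw, fun p hp hpv => hw2 ⟨p, hp, hpv⟩⟩
    · rintro ⟨hv, h⟩
      exact Or.inr ⟨v, ⟨hv, fun ⟨p, hp, hpv⟩ => h p hp hpv⟩, rfl⟩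
  refine ⟨?_, ?_, ?_⟩
  · rintro m ⟨hmA, hF, hV, hB⟩
    refine ⟨?_, ?_, ?_⟩
    · intro e he
      simp only [Finset.mem_union, Finset.mem_image, Finset.mem_filter] at he ⊢
      rcases he with ⟨p, hp, rfl⟩ | ⟨v, ⟨hv, _⟩, rfl⟩
      · exact Or.inl ⟨p, hmA hp, rfl⟩
      · exact Or.inr ⟨v, hv, rfl⟩
    · intro f
      obtain ⟨p, ⟨hpm, hpf⟩, hpu⟩ := hF f
      refine ⟨p, ⟨(hinl m p).2 hpm, hpf⟩, ?_⟩
      rintro q ⟨hq, hqf⟩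
      exact hpu q ⟨(hinl m q).1 hq, hqf⟩
    · intro v
      by_cases h : ∃ p ∈ m, p.1 = v
      · obtain ⟨p, hp, hpv⟩ := h
        refine ⟨Sum.inl p, ⟨(hinl m p).2 hp, Or.inl ⟨p, rfl, hpv⟩⟩, ?_⟩
        rintro e ⟨he, (⟨q, rfl, hqv⟩ | rfl)⟩
        · exact congrArg Sum.inl (hV v q ((hinl m q).1 he) p hp hqv hpv)
        · exact absurd hpv (((hinr m v).1 he).2 p hp)
      · have hvB : v ∈ B := by
          by_contra hvB
          exact h (hB v hvB)
        refine ⟨Sum.inr v, ⟨(hinr m v).2 ⟨hvB, fun p hp hpv => h ⟨p, hp, hpv⟩⟩,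
          Or.inr rfl⟩, ?_⟩
        rintro e ⟨he, (⟨q, rfl, hqv⟩ | rfl)⟩
        · exact absurd ⟨q, (hinl m q).1 he, hqv⟩ h
        · rfl
  · intro m₁ _ m₂ _ heq
    ext p
    have h := Finset.ext_iff.mp heq (Sum.inl p)
    rw [hinl m₁ p, hinl m₂ p] at h
    exact h
  · rintro N ⟨hNsub, hNF, hNV⟩
    set m : Finset (V × F) := N.preimage Sum.inl Sum.inl_injective.injOn with hm
    have hmN : ∀ p : V × F, p ∈ m ↔ Sum.inl p ∈ N := fun p => Finset.mem_preimage
    have hinrN : ∀ v : V, Sum.inr v ∈ N ↔ v ∈ B ∧ ∀ p ∈ m, p.1 ≠ v := by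
      intro v
      constructor
      · intro hv
        have hvB : v ∈ B := by
          have := hNsub hv
          simp only [Finset.mem_union, Finset.mem_image] at this
          rcases this with ⟨p, _, h⟩ | ⟨w, hw, h⟩
          · exact absurd h (by simp)
          · obtain rfl : w = v := Sum.inr.inj h
            exact hw
        refine ⟨hvB, fun p hp hpv => ?_⟩
        obtain ⟨e, _, heu⟩ := hNV v
        have h1 := heu (Sum.inl p) ⟨(hmN p).1 hp, Or.inl ⟨p, rfl, hpv⟩⟩
        have h2 := heu (Sum.inr v) ⟨hv, Or.inr rfl⟩
        exact absurd (h1.trans h2.symm) (by simp)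
      · rintro ⟨hvB, h⟩
        obtain ⟨e, ⟨heN, hev⟩, _⟩ := hNV v
        rcases hev with ⟨q, rfl, hqv⟩ | rfl
        · exact absurd hqv (h q ((hmN q).2 heN))
        · exact heN
    refine ⟨m, ⟨?_, ?_, ?_, ?_⟩, ?_⟩
    · intro p hp
      have := hNsub ((hmN p).1 hp)
      simp only [Finset.mem_union, Finset.mem_image] at this
      rcases this with ⟨q, hq, h⟩ | ⟨w, _, h⟩
      · obtain rfl : q = p := Sum.inl.inj h
        exact hq
      · exact absurd h (by simp)
    · intro f
      obtain ⟨p, ⟨hpN, hpf⟩, hpu⟩ := hNF f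
      exact ⟨p, ⟨(hmN p).2 hpN, hpf⟩, fun q ⟨hq, hqf⟩ => hpu q ⟨(hmN q).1 hq, hqf⟩⟩
    · intro v p hp q hq hpv hqv
      obtain ⟨e, _, heu⟩ := hNV v
      have h1 := heu (Sum.inl p) ⟨(hmN p).1 hp, Or.inl ⟨p, rfl, hpv⟩⟩
      have h2 := heu (Sum.inl q) ⟨(hmN q).1 hq, Or.inl ⟨q, rfl, hqv⟩⟩
      exact Sum.inl.inj (h1.trans h2.symm)
    · intro v hvB
      obtain ⟨e, ⟨heN, hev⟩, _⟩ := hNV v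
      rcases hev with ⟨q, rfl, hqv⟩ | rfl
      · exact ⟨q, (hmN q).2 heN, hqv⟩
      · exact absurd ((hinrN v).1 heN).1 hvB
    · ext e
      rcases e with p | v
      · rw [hinl m p, hmN p]
      · rw [hinr m v, hinrN v]
end
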